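/- arXiv:2001.03686 — 4 statements merged into one kernel-verified Lean document; each statement's English description precedes it below -/
import Mathlib

section
/- Assume additionally that α and β are nonnegative on K. Then there exist positive real numbers B₁ and B₂ such that for all M ≥ B₁, all N ≥ B₂, and all x ∈ K: g₁(x, 0, v) ≥ 0 and g₁(x, M, v) < 0 for every v ∈ [0, N], and g₂(x, u, 0) ≥ 0 and g₂(x, u, N) < 0 for every u ∈ [0, M]. (These are the invariant-rectangle inequalities established in Proposition 2.1.) -/
/-!
Only upper bounds of `m`, `α`, `β` on the compact space `K` matter. Once `M` exceeds `max m` and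
`b * M` exceeds `max β`, the edge value `g₁(x, M, v) = (m - α - M) M + (β - b M) v` is a negative
term plus a nonpositive one, while `g₁(x, 0, v) = β v ≥ 0`. The second component is the same
statement with the roles of `(u, α, b)` and `(v, β, c)` exchanged.
-/

open Set

lemma exists_pos_forall_le_of_bddAbove {K : Type*} {m β : K → ℝ} (hm : BddAbove (range m))
    (hβ : BddAbove (range β)) {b : ℝ} (hb : 0 < b) :
    ∃ B, 0 < B ∧ ∀ M, B ≤ M → ∀ x, m x < M ∧ β x ≤ b * M := by
  obtain ⟨Cm, hCm⟩ := hm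
  obtain ⟨Cβ, hCβ⟩ := hβ
  refine ⟨max 1 (max (Cm + 1) (Cβ / b)), by positivity, fun M hM x => ⟨?_, ?_⟩⟩
  · calc m x ≤ Cm := hCm (mem_range_self x)
      _ < Cm + 1 := lt_add_one Cm
      _ ≤ M := (le_max_left _ _).trans ((le_max_right _ _).trans hM)
  · calc β x ≤ Cβ := hCβ (mem_range_self x)
      _ = b * (Cβ / b) := (mul_div_cancel₀ Cβ hb.ne').symm
      _ ≤ b * M := by gcongr; exact (le_max_right _ _).trans ((le_max_right _ _).trans hM)

lemma edge_signs {m a β b M v : ℝ} (ha : 0 ≤ a) (hβ : 0 ≤ β) (hmM : m < M) (hM : 0 < M)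
    (hβM : β ≤ b * M) (hv : 0 ≤ v) :
    0 ≤ (m - a - 0) * 0 + (β - b * 0) * v ∧ (m - a - M) * M + (β - b * M) * v < 0 := by
  refine ⟨by simpa using mul_nonneg hβ hv, ?_⟩
  have h_diag : (m - a - M) * M < 0 := mul_neg_of_neg_of_pos (by linarith) hM
  have h_cross : (β - b * M) * v ≤ 0 := mul_nonpos_of_nonpos_of_nonneg (by linarith) hv
  linarith

theorem stmt_0_general {K : Type*} [TopologicalSpace K] [CompactSpace K]
    (m α β : K → ℝ) (hm : Continuous m) (hα : Continuous α) (hβ : Continuous β)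
    (b c : ℝ) (hb : 0 < b) (hc : 0 < c)
    (hαnn : ∀ x, 0 ≤ α x) (hβnn : ∀ x, 0 ≤ β x)
    (g₁ g₂ : K → ℝ → ℝ → ℝ)
    (hg₁ : ∀ x u v, g₁ x u v = (m x - α x - u) * u + (β x - b * u) * v)
    (hg₂ : ∀ x u v, g₂ x u v = (m x - β x - v) * v + (α x - c * v) * u) :
    ∃ B₁ B₂ : ℝ, 0 < B₁ ∧ 0 < B₂ ∧
      ∀ M, B₁ ≤ M → ∀ N, B₂ ≤ N → ∀ x : K,
        (∀ v ∈ Set.Icc (0 : ℝ) N, 0 ≤ g₁ x 0 v ∧ g₁ x M v < 0) ∧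
        (∀ u ∈ Set.Icc (0 : ℝ) M, 0 ≤ g₂ x u 0 ∧ g₂ x u N < 0) := by
  have hm_bdd := (isCompact_range hm).bddAbove
  obtain ⟨B₁, hB₁, h₁⟩ := exists_pos_forall_le_of_bddAbove hm_bdd (isCompact_range hβ).bddAbove hb
  obtain ⟨B₂, hB₂, h₂⟩ := exists_pos_forall_le_of_bddAbove hm_bdd (isCompact_range hα).bddAbove hc
  refine ⟨B₁, B₂, hB₁, hB₂, fun M hM N hN x => ⟨fun v hv => ?_, fun u hu => ?_⟩⟩
  · obtain ⟨hmM, hβM⟩ := h₁ M hM x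
    simpa only [hg₁] using edge_signs (hαnn x) (hβnn x) hmM (hB₁.trans_le hM) hβM hv.1
  · obtain ⟨hmN, hαN⟩ := h₂ N hN x
    simpa only [hg₂] using edge_signs (hβnn x) (hαnn x) hmN (hB₂.trans_le hN) hαN hu.1

/-- Proposition 2.1 (invariant-rectangle inequalities): with
`g₁(x,u,v) = (m x − α x − u)·u + (β x − b·u)·v` and
`g₂(x,u,v) = (m x − β x − v)·v + (α x − c·v)·u`, assuming `α, β ≥ 0` on the
nonempty compact space `K`, there are `B₁, B₂ > 0` such that for all
`M ≥ B₁`, `N ≥ B₂` and all `x ∈ K` the stated sign conditions hold. -/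
theorem stmt_0 {K : Type*} [TopologicalSpace K] [CompactSpace K] [Nonempty K]
    (m α β : K → ℝ) (hm : Continuous m) (hα : Continuous α) (hβ : Continuous β)
    (b c : ℝ) (hb : 0 < b) (hc : 0 < c)
    (hαnn : ∀ x, 0 ≤ α x) (hβnn : ∀ x, 0 ≤ β x)
    (g₁ g₂ : K → ℝ → ℝ → ℝ)
    (hg₁ : ∀ x u v, g₁ x u v = (m x - α x - u) * u + (β x - b * u) * v)
    (hg₂ : ∀ x u v, g₂ x u v = (m x - β x - v) * v + (α x - c * v) * u) :
    ∃ B₁ B₂ : ℝ, 0 < B₁ ∧ 0 < B₂ ∧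
      ∀ M, B₁ ≤ M → ∀ N, B₂ ≤ N → ∀ x : K,
        (∀ v ∈ Set.Icc (0 : ℝ) N, 0 ≤ g₁ x 0 v ∧ g₁ x M v < 0) ∧
        (∀ u ∈ Set.Icc (0 : ℝ) M, 0 ≤ g₂ x u 0 ∧ g₂ x u N < 0) :=
  stmt_0_general m α β hm hα hβ b c hb hc hαnn hβnn g₁ g₂ hg₁ hg₂
end

section
/- Assume m̲ > 0, α̲ > 0, β̲ > 0, set k = min{α̲/ᾱ, β̲/β̄}, and suppose k > max{1 − m̲/(b·m̄), 1 − m̲/(c·m̄)} and that m̲ + b(k−1)·m̄ − ᾱ − β̄/b > 0 and m̲ + c(k−1)·m̄ − β̄ − ᾱ/c > 0. Then for every x ∈ K: g₁(x, m̄, v) < 0 for all v ∈ [0, m̄]; g₂(x, u, m̄) < 0 for all u ∈ [0, m̄]; g₁(x, β̄/b, v) > 0 for all v ∈ [ᾱ/c, m̄]; and g₂(x, u, ᾱ/c) > 0 for all u ∈ [β̄/b, m̄]. (These are the estimates proved in Proposition 2.2(1), showing the rectangle (β̄/b, m̄] × (ᾱ/c, m̄] is invariant and attracting for the reaction terms.)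 -/
/-!
Both reaction terms have the form `(m - a - u) u + (e - b u) v`. At `u = m̄` the first summand is
at most `-a m̄ < 0` and the second is nonpositive because `β̄ ≤ b m̄`. At `u = β̄/b` the factor
`e - b u = β - β̄` lies in `[(k - 1) β̄, 0]` (since `k β̄ ≤ β̲`), so for `v ≤ m̄` the term is at least
`(β̄/b) (m̲ - ᾱ - β̄/b + b (k - 1) m̄) > 0`. The second reaction term is the first one with the roles
of `(u, α, b)` and `(v, β, c)` exchanged.
-/

def reactionTerm (m a e b u v : ℝ) : ℝ := (m - a - u) * u + (e - b * u) * v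

lemma reactionTerm_neg {m a e b M v : ℝ} (hm : m ≤ M) (ha : 0 < a) (hM : 0 < M)
    (he : e ≤ b * M) (hv : 0 ≤ v) : reactionTerm m a e b M v < 0 := by
  have hfirst : (m - a - M) * M < 0 := mul_neg_of_neg_of_pos (by linarith) hM
  have hsecond : (e - b * M) * v ≤ 0 := mul_nonpos_of_nonpos_of_nonneg (by linarith) hv
  unfold reactionTerm
  linarith

lemma reactionTerm_pos {m a e b p v M k : ℝ} (hp : 0 < p) (hM : 0 ≤ M) (hvM : v ≤ M)
    (hke : k * (b * p) ≤ e) (he : e ≤ b * p) (h : 0 < m - a + b * (k - 1) * M - p) :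
    0 < reactionTerm m a e b p v :=
  calc 0 < p * (m - a + b * (k - 1) * M - p) := mul_pos hp h
    _ = (m - a - p) * p + (k * (b * p) - b * p) * M := by ring
    _ ≤ (m - a - p) * p + (e - b * p) * M := by gcongr
    _ ≤ (m - a - p) * p + (e - b * p) * v := by
      gcongr (m - a - p) * p + ?_
      exact mul_le_mul_of_nonpos_left hvM (by linarith)

lemma reactionTerm_edges {m a e b mlo mhi ahi elo ehi k : ℝ} (hb : 0 < b) (ha : 0 < a)
    (hmlo : 0 < mlo) (hm : mlo ≤ m) (hm' : m ≤ mhi) (ha' : a ≤ ahi) (he : elo ≤ e) (he' : e ≤ ehi)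
    (hehi : 0 < ehi) (hke : k * ehi ≤ elo) (hk : k ≤ 1)
    (hS : 0 < mlo + b * (k - 1) * mhi - ahi - ehi / b) :
    (∀ v ∈ Set.Icc 0 mhi, reactionTerm m a e b mhi v < 0) ∧
      ∀ v ≤ mhi, 0 < reactionTerm m a e b (ehi / b) v := by
  have hp : 0 < ehi / b := div_pos hehi hb
  have hbp : b * (ehi / b) = ehi := mul_div_cancel₀ ehi hb.ne'
  have hbk : b * (k - 1) * mhi ≤ 0 :=
    mul_nonpos_of_nonpos_of_nonneg (mul_nonpos_of_nonneg_of_nonpos hb.le (by linarith))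
      (by linarith)
  have hpm : ehi / b < mhi := by linarith
  refine ⟨fun v hv => reactionTerm_neg hm' ha (hp.trans hpm) ?_ hv.1, fun v hv =>
    reactionTerm_pos (k := k) hp (hp.trans hpm).le hv (by rw [hbp]; linarith) (by rw [hbp]; linarith)
      (by linarith)⟩
  calc e ≤ b * (ehi / b) := by rw [hbp]; exact he'
    _ ≤ b * mhi := by gcongr

theorem stmt_3_general {K : Type*}
    (m α β : K → ℝ)
    (b c : ℝ) (hb : 0 < b) (hc : 0 < c)
    (g₁ g₂ : K → ℝ → ℝ → ℝ)
    (hg₁ : ∀ x u v, g₁ x u v = (m x - α x - u) * u + (β x - b * u) * v)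
    (hg₂ : ∀ x u v, g₂ x u v = (m x - β x - v) * v + (α x - c * v) * u)
    (mlo mhi αlo αhi βlo βhi : ℝ)
    (hmlo : IsLeast (Set.range m) mlo) (hmhi : IsGreatest (Set.range m) mhi)
    (hαlo : IsLeast (Set.range α) αlo) (hαhi : IsGreatest (Set.range α) αhi)
    (hβlo : IsLeast (Set.range β) βlo) (hβhi : IsGreatest (Set.range β) βhi)
    (hmpos : 0 < mlo) (hαpos : 0 < αlo) (hβpos : 0 < βlo)
    (k : ℝ) (hk : k = min (αlo / αhi) (βlo / βhi))
    (hS1a : 0 < mlo + b * (k - 1) * mhi - αhi - βhi / b)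
    (hS1b : 0 < mlo + c * (k - 1) * mhi - βhi - αhi / c) :
    ∀ x : K,
      (∀ v ∈ Set.Icc (0 : ℝ) mhi, g₁ x mhi v < 0) ∧
      (∀ u ∈ Set.Icc (0 : ℝ) mhi, g₂ x u mhi < 0) ∧
      (∀ v ∈ Set.Icc (αhi / c) mhi, 0 < g₁ x (βhi / b) v) ∧
      (∀ u ∈ Set.Icc (βhi / b) mhi, 0 < g₂ x u (αhi / c)) := by
  intro x
  have hαhi_pos : 0 < αhi := hαpos.trans_le (hαhi.2 hαlo.1)
  have hβhi_pos : 0 < βhi := hβpos.trans_le (hβhi.2 hβlo.1)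
  have hkα : k * αhi ≤ αlo := (le_div_iff₀ hαhi_pos).1 (hk ▸ min_le_left _ _)
  have hkβ : k * βhi ≤ βlo := (le_div_iff₀ hβhi_pos).1 (hk ▸ min_le_right _ _)
  have hk_le : k ≤ 1 := le_of_mul_le_mul_right (by linarith [hβhi.2 hβlo.1]) hβhi_pos
  obtain ⟨hup₁, hlow₁⟩ := reactionTerm_edges hb (hαpos.trans_le (hαlo.2 ⟨x, rfl⟩)) hmpos
    (hmlo.2 ⟨x, rfl⟩) (hmhi.2 ⟨x, rfl⟩) (hαhi.2 ⟨x, rfl⟩) (hβlo.2 ⟨x, rfl⟩)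
    (hβhi.2 ⟨x, rfl⟩) hβhi_pos hkβ hk_le hS1a
  obtain ⟨hup₂, hlow₂⟩ := reactionTerm_edges hc (hβpos.trans_le (hβlo.2 ⟨x, rfl⟩)) hmpos
    (hmlo.2 ⟨x, rfl⟩) (hmhi.2 ⟨x, rfl⟩) (hβhi.2 ⟨x, rfl⟩) (hαlo.2 ⟨x, rfl⟩)
    (hαhi.2 ⟨x, rfl⟩) hαhi_pos hkα hk_le hS1b
  simp only [hg₁, hg₂]
  exact ⟨hup₁, hup₂, fun v hv => hlow₁ v hv.2, fun u hu => hlow₂ u hu.2⟩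

/-- Proposition 2.2(1): under positivity of `m̲, α̲, β̲` and the smallness
conditions on the oscillation of `α, β` (via `k`), the rectangle
`(β̄/b, m̄] × (ᾱ/c, m̄]` is invariant and attracting for the reaction terms. -/
theorem stmt_3 {K : Type*} [TopologicalSpace K] [CompactSpace K] [Nonempty K]
    (m α β : K → ℝ) (hm : Continuous m) (hα : Continuous α) (hβ : Continuous β)
    (b c : ℝ) (hb : 0 < b) (hc : 0 < c)
    (g₁ g₂ : K → ℝ → ℝ → ℝ)
    (hg₁ : ∀ x u v, g₁ x u v = (m x - α x - u) * u + (β x - b * u) * v)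
    (hg₂ : ∀ x u v, g₂ x u v = (m x - β x - v) * v + (α x - c * v) * u)
    (mlo mhi αlo αhi βlo βhi : ℝ)
    (hmlo : IsLeast (Set.range m) mlo) (hmhi : IsGreatest (Set.range m) mhi)
    (hαlo : IsLeast (Set.range α) αlo) (hαhi : IsGreatest (Set.range α) αhi)
    (hβlo : IsLeast (Set.range β) βlo) (hβhi : IsGreatest (Set.range β) βhi)
    (hmpos : 0 < mlo) (hαpos : 0 < αlo) (hβpos : 0 < βlo)
    (k : ℝ) (hk : k = min (αlo / αhi) (βlo / βhi))
    (hkbig : k > max (1 - mlo / (b * mhi)) (1 - mlo / (c * mhi)))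
    (hS1a : 0 < mlo + b * (k - 1) * mhi - αhi - βhi / b)
    (hS1b : 0 < mlo + c * (k - 1) * mhi - βhi - αhi / c) :
    ∀ x : K,
      (∀ v ∈ Set.Icc (0 : ℝ) mhi, g₁ x mhi v < 0) ∧
      (∀ u ∈ Set.Icc (0 : ℝ) mhi, g₂ x u mhi < 0) ∧
      (∀ v ∈ Set.Icc (αhi / c) mhi, 0 < g₁ x (βhi / b) v) ∧
      (∀ u ∈ Set.Icc (βhi / b) mhi, 0 < g₂ x u (αhi / c)) :=
  stmt_3_general m α β b c hb hc g₁ g₂ hg₁ hg₂ mlo mhi αlo αhi βlo βhi hmlo hmhi hαlo hαhi hβlo hβhi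
    hmpos hαpos hβpos k hk hS1a hS1b
end

section
/- Assume α̲ > 0 and β̲ > 0, set k₁ = max{β̄/β̲, ᾱ/α̲} ≥ 1, and suppose m̄ − β̲/b + (b(k₁−1) − c)·(α̲/c) < 0 and m̄ − α̲/c + (c(k₁−1) − b)·(β̲/b) < 0. Then for every x ∈ K, every u ∈ [0, β̲/b], and every v ∈ [0, α̲/c]: g₁(x, β̲/b, v) < 0 and g₂(x, u, α̲/c) < 0. (These are the estimates proved in Proposition 2.2(2), showing the rectangle [0, β̲/b] × [0, α̲/c] is invariant for the reaction terms.) -/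
/-!
On the edge `u = β̲/b` the bracket `β x - b u` equals `β x - β̲ ≤ (k₁ - 1) β̲`, so the cross term
is at most `(k₁ - 1) β̲ · α̲/c`, while the logistic term is at most `(m̄ - α̲ - β̲/b) · β̲/b`.
Factoring out `β̲/b` leaves exactly the left side of the first hypothesis. The edge `v = α̲/c`
is the same estimate with the roles of the two species exchanged.
-/

open Set

theorem reaction_neg_on_edge {m a β M αlo βlo k b c v : ℝ} (hb : 0 < b) (hc : c ≠ 0) (hβlo : 0 < βlo)
    (hm : m ≤ M) (ha : αlo ≤ a) (hβ : βlo ≤ β) (hβk : β ≤ k * βlo) (hv : v ∈ Icc 0 (αlo / c))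
    (hneg : M - βlo / b + (b * (k - 1) - c) * (αlo / c) < 0) :
    (m - a - βlo / b) * (βlo / b) + (β - b * (βlo / b)) * v < 0 := by
  have hU : 0 < βlo / b := div_pos hβlo hb
  have hk : 0 ≤ (k - 1) * βlo := by linarith
  have hlogistic : (m - a - βlo / b) * (βlo / b) ≤ (M - αlo - βlo / b) * (βlo / b) :=
    mul_le_mul_of_nonneg_right (by linarith) hU.le
  have hcross : (β - b * (βlo / b)) * v ≤ (k - 1) * βlo * (αlo / c) := by
    rw [mul_div_cancel₀ _ hb.ne']
    exact mul_le_mul (by linarith) hv.2 hv.1 hk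
  have hfactor : (M - αlo - βlo / b) * (βlo / b) + (k - 1) * βlo * (αlo / c)
      = (M - βlo / b + (b * (k - 1) - c) * (αlo / c)) * (βlo / b) := by
    field_simp
    ring
  linarith [mul_neg_of_neg_of_pos hneg hU]

theorem stmt_4_general {K : Type*}
    (m α β : K → ℝ)
    (b c : ℝ) (hb : 0 < b) (hc : 0 < c)
    (g₁ g₂ : K → ℝ → ℝ → ℝ)
    (hg₁ : ∀ x u v, g₁ x u v = (m x - α x - u) * u + (β x - b * u) * v)
    (hg₂ : ∀ x u v, g₂ x u v = (m x - β x - v) * v + (α x - c * v) * u)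
    (mhi αlo αhi βlo βhi : ℝ)
    (hmhi : IsGreatest (Set.range m) mhi)
    (hαlo : IsLeast (Set.range α) αlo) (hαhi : IsGreatest (Set.range α) αhi)
    (hβlo : IsLeast (Set.range β) βlo) (hβhi : IsGreatest (Set.range β) βhi)
    (hαpos : 0 < αlo) (hβpos : 0 < βlo)
    (k₁ : ℝ) (hk₁ : k₁ = max (βhi / βlo) (αhi / αlo))
    (hS2a : mhi - βlo / b + (b * (k₁ - 1) - c) * (αlo / c) < 0)
    (hS2b : mhi - αlo / c + (c * (k₁ - 1) - b) * (βlo / b) < 0) :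
    ∀ x : K, ∀ u ∈ Set.Icc (0 : ℝ) (βlo / b), ∀ v ∈ Set.Icc (0 : ℝ) (αlo / c),
      g₁ x (βlo / b) v < 0 ∧ g₂ x u (αlo / c) < 0 := by
  intro x u hu v hv
  have hβk : βhi ≤ k₁ * βlo := (div_le_iff₀ hβpos).mp (hk₁ ▸ le_max_left _ _)
  have hαk : αhi ≤ k₁ * αlo := (div_le_iff₀ hαpos).mp (hk₁ ▸ le_max_right _ _)
  have hmx := hmhi.2 (mem_range_self x)
  have hαx := hαlo.2 (mem_range_self x)
  have hβx := hβlo.2 (mem_range_self x)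
  refine ⟨?_, ?_⟩
  · rw [hg₁]
    exact reaction_neg_on_edge hb hc.ne' hβpos hmx hαx hβx
      ((hβhi.2 (mem_range_self x)).trans hβk) hv hS2a
  · rw [hg₂]
    exact reaction_neg_on_edge hc hb.ne' hαpos hmx hβx hαx
      ((hαhi.2 (mem_range_self x)).trans hαk) hu hS2b

/-- Proposition 2.2(2): under the stated conditions involving
`k₁ = max{β̄/β̲, ᾱ/α̲}`, the rectangle `[0, β̲/b] × [0, α̲/c]` is invariant
for the reaction terms: `g₁(x, β̲/b, v) < 0` and `g₂(x, u, α̲/c) < 0` there. -/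
theorem stmt_4 {K : Type*} [TopologicalSpace K] [CompactSpace K] [Nonempty K]
    (m α β : K → ℝ) (hm : Continuous m) (hα : Continuous α) (hβ : Continuous β)
    (b c : ℝ) (hb : 0 < b) (hc : 0 < c)
    (g₁ g₂ : K → ℝ → ℝ → ℝ)
    (hg₁ : ∀ x u v, g₁ x u v = (m x - α x - u) * u + (β x - b * u) * v)
    (hg₂ : ∀ x u v, g₂ x u v = (m x - β x - v) * v + (α x - c * v) * u)
    (mhi αlo αhi βlo βhi : ℝ)
    (hmhi : IsGreatest (Set.range m) mhi)
    (hαlo : IsLeast (Set.range α) αlo) (hαhi : IsGreatest (Set.range α) αhi)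
    (hβlo : IsLeast (Set.range β) βlo) (hβhi : IsGreatest (Set.range β) βhi)
    (hαpos : 0 < αlo) (hβpos : 0 < βlo)
    (k₁ : ℝ) (hk₁ : k₁ = max (βhi / βlo) (αhi / αlo))
    (hS2a : mhi - βlo / b + (b * (k₁ - 1) - c) * (αlo / c) < 0)
    (hS2b : mhi - αlo / c + (c * (k₁ - 1) - b) * (βlo / b) < 0) :
    ∀ x : K, ∀ u ∈ Set.Icc (0 : ℝ) (βlo / b), ∀ v ∈ Set.Icc (0 : ℝ) (αlo / c),
      g₁ x (βlo / b) v < 0 ∧ g₂ x u (αlo / c) < 0 :=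
  stmt_4_general m α β b c hb hc g₁ g₂ hg₁ hg₂ mhi αlo αhi βlo βhi hmhi hαlo hαhi hβlo hβhi hαpos
    hβpos k₁ hk₁ hS2a hS2b
end

section
/- Let m̄ be any real number and let k₁ be a real number with 1 ≤ k₁ < 1 + k₀. Then the set S₂ = {(x, y) ∈ ℝ² : x > 0, y > 0, m̄ − x + (b(k₁−1) − c)·y < 0, and m̄ − y + (c(k₁−1) − b)·x < 0} is nonempty. -/
open Filter

/-- Writing `q x = (b x - c) (c x - b)`, the identity
`1 - q t = q k₀ - q t = (k₀ - t) (b c (k₀ - t) + c (b t - c) + b (c t - b))`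
shows that `q t < 1` once `t < k₀` and both factors of `q t` are positive. -/
theorem mul_lt_one_of_lt_root {b c k₀ t : ℝ} (hb : 0 < b) (hc : 0 < c)
    (hroot : (b * k₀ - c) * (c * k₀ - b) = 1) (ht : t < k₀)
    (hA : 0 < b * t - c) (hC : 0 < c * t - b) :
    (b * t - c) * (c * t - b) < 1 := by
  have key : 1 - (b * t - c) * (c * t - b)
      = (k₀ - t) * (b * c * (k₀ - t) + c * (b * t - c) + b * (c * t - b)) := by
    linear_combination -hroot
  have hk : 0 < k₀ - t := sub_pos.mpr ht
  have : 0 < (k₀ - t) * (b * c * (k₀ - t) + c * (b * t - c) + b * (c * t - b)) := by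
    positivity
  linarith

theorem exists_pos_gt_mul_lt_one {A C : ℝ} (h : 0 < A → 0 < C → A * C < 1) :
    ∃ l, 0 < l ∧ C < l ∧ A * l < 1 := by
  rcases le_or_gt A 0 with hA | hA
  · refine ⟨max C 0 + 1, by positivity, by linarith [le_max_left C 0], ?_⟩
    nlinarith [le_max_right C 0]
  · have hmax : max C 0 < 1 / A := by
      refine max_lt ?_ (by positivity)
      rcases le_or_gt C 0 with hC | hC
      · exact hC.trans_lt (by positivity)
      · rw [lt_div_iff₀ hA, mul_comm]
        exact h hA hC
    obtain ⟨l, hCl, hlA⟩ := exists_between hmax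
    exact ⟨l, (le_max_right C 0).trans_lt hCl, (le_max_left C 0).trans_lt hCl,
      by rwa [lt_div_iff₀' hA] at hlA⟩

/-- Along a ray `y = l x` with `C < l` and `A l < 1`, both constraints are eventually
satisfied, whatever `m` is. -/
theorem nonempty_of_mul_lt_one (m A C : ℝ) (h : 0 < A → 0 < C → A * C < 1) :
    {p : ℝ × ℝ | 0 < p.1 ∧ 0 < p.2 ∧ m - p.1 + A * p.2 < 0 ∧ m - p.2 + C * p.1 < 0}.Nonempty := by
  obtain ⟨l, hl, hCl, hAl⟩ := exists_pos_gt_mul_lt_one h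
  have h₁ : ∀ᶠ x in atTop, m < (1 - A * l) * x :=
    (tendsto_id.const_mul_atTop (sub_pos.mpr hAl)).eventually_gt_atTop m
  have h₂ : ∀ᶠ x in atTop, m < (l - C) * x :=
    (tendsto_id.const_mul_atTop (sub_pos.mpr hCl)).eventually_gt_atTop m
  obtain ⟨x, hx, hx₁, hx₂⟩ := ((eventually_gt_atTop 0).and (h₁.and h₂)).exists
  exact ⟨(x, l * x), hx, mul_pos hl hx, by linarith, by linarith⟩

theorem stmt_7_general (b c : ℝ) (hb : 0 < b) (hc : 0 < c)
    (k₀ : ℝ) (hroot : (b * k₀ - c) * (c * k₀ - b) = 1)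
    (mhi : ℝ) (k₁ : ℝ) (hk₁lt : k₁ < 1 + k₀) :
    {p : ℝ × ℝ | 0 < p.1 ∧ 0 < p.2 ∧
        mhi - p.1 + (b * (k₁ - 1) - c) * p.2 < 0 ∧
        mhi - p.2 + (c * (k₁ - 1) - b) * p.1 < 0}.Nonempty :=
  nonempty_of_mul_lt_one mhi _ _
    (mul_lt_one_of_lt_root hb hc hroot (by linarith))

/-- For any real `m̄` and any `k₁` with `1 ≤ k₁ < 1 + k₀` (`k₀` the larger root
of `(b·x − c)·(c·x − b) = 1`), the set
`S₂ = {(x,y) : x > 0, y > 0, m̄ − x + (b(k₁−1) − c)·y < 0, m̄ − y + (c(k₁−1) − b)·x < 0}`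
is nonempty. -/
theorem stmt_7 (b c : ℝ) (hb : 0 < b) (hc : 0 < c)
    (k₀ : ℝ) (hroot : (b * k₀ - c) * (c * k₀ - b) = 1)
    (hlargest : ∀ x : ℝ, (b * x - c) * (c * x - b) = 1 → x ≤ k₀)
    (mhi : ℝ) (k₁ : ℝ) (hk₁le : 1 ≤ k₁) (hk₁lt : k₁ < 1 + k₀) :
    {p : ℝ × ℝ | 0 < p.1 ∧ 0 < p.2 ∧
        mhi - p.1 + (b * (k₁ - 1) - c) * p.2 < 0 ∧
        mhi - p.2 + (c * (k₁ - 1) - b) * p.1 < 0}.Nonempty :=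
  stmt_7_general b c hb hc k₀ hroot mhi k₁ hk₁lt
end
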